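/- Let A be a generalized Poisson algebra with bracket {·,·} and derivation D (a derivation of both the product and the bracket), and set {f,g}_D := {f,g} - (1/2)(fD(g) - D(f)g), D' := (1/2)D. Then for all f,g,h ∈ A: {f,{g,h}_D}_D = {{f,g}_D, h}_D + {g,{f,h}_D}_D - D'(f){g,h}_D - D'(g){h,f}_D - D'(h){f,g}_D. -/
import Mathlib


/-- The modified bracket `{f,g}_D = {f,g} - (1/2)(f D(g) - D(f) g)`. -/
def brD {F A : Type*} [Field F] [CommRing A] [Algebra F A]
    (br : A →ₗ[F] A →ₗ[F] A) (D : A →ₗ[F] A) : A → A → A :=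
  fun f g => br f g - (2 : F)⁻¹ • (f * D g - D f * g)

/-- Let `A` be a generalized Poisson algebra with bracket `{·,·}` and
derivation `D` (a derivation of both product and bracket), and set
`{f,g}_D := {f,g} - (1/2)(f D(g) - D(f) g)`, `D' := (1/2)D`. Then
`{f,{g,h}_D}_D = {{f,g}_D,h}_D + {g,{f,h}_D}_D - D'(f){g,h}_D - D'(g){h,f}_D
 - D'(h){f,g}_D`. -/
theorem brD_modified_jacobi
    (F : Type*) [Field F] [CharZero F]
    (A : Type*) [CommRing A] [Algebra F A]
    (br : A →ₗ[F] A →ₗ[F] A) (D : A →ₗ[F] A)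
    (halt : ∀ a : A, br a a = 0)
    (hjac : ∀ a b c : A, br a (br b c) = br (br a b) c + br b (br a c))
    (hleib : ∀ a b c : A, br a (b * c) = br a b * c + b * br a c + D a * (b * c))
    (hDmul : ∀ a b : A, D (a * b) = D a * b + a * D b)
    (hDbr : ∀ a b : A, D (br a b) = br (D a) b + br a (D b)) :
    ∀ f g h : A, brD br D f (brD br D g h) =
      brD br D (brD br D f g) h + brD br D g (brD br D f h)
      - ((2 : F)⁻¹ • D f) * brD br D g h
      - ((2 : F)⁻¹ • D g) * brD br D h f
      - ((2 : F)⁻¹ • D h) * brD br D f g := by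
  have hanti : ∀ a b : A, br a b = -br b a := by
    intro a b
    have h0 := halt (a + b)
    simp only [map_add, LinearMap.add_apply, halt] at h0
    linear_combination h0
  have hleib' : ∀ a b c : A, br (b * c) a = -(br a b * c) - b * br a c - D a * (b * c) := by
    intro a b c
    rw [hanti (b*c) a, hleib]
    ring
  intro f g h
  simp only [brD, map_sub, map_smul, LinearMap.sub_apply, LinearMap.smul_apply,
    smul_sub, smul_add, mul_smul_comm, smul_mul_assoc, smul_smul,
    hleib, hleib', hDmul, hDbr]
  simp only [Algebra.smul_def, map_mul]
  linear_combination hjac f g h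
    + (algebraMap F A (2⁻¹ : F) * D h) * hanti f g
    + (algebraMap F A (2⁻¹ : F) * D f) * hanti g h
    - (algebraMap F A (2⁻¹ : F) * f) * hanti (D g) h
    + (algebraMap F A (2⁻¹ : F) * g) * hanti h (D f)
    - (algebraMap F A (2⁻¹ : F) * h) * hanti (D f) g
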